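/- arXiv:2504.10699 — 2 statements merged into one kernel-verified Lean document; each statement's English description precedes it below -/
import Mathlib

section
/- Let φ₁ and φ₂ be hybrid arcs with dom φ₁ a compact hybrid time domain, such that φ₁(T,J) = φ₂(0,0) where (T,J) = max dom φ₁. Then their concatenation φ = φ₁|φ₂ satisfies: for each j ∈ ℕ, the function t ↦ φ(t,j) is locally absolutely continuous on the interval I^j_φ := {t : (t,j) ∈ dom φ}. -/
open MeasureTheory Set

noncomputable section

/-- State/input space: `ℝ^k` with the Euclidean norm. -/
abbrev Vec (k : ℕ) : Type := EuclideanSpace ℝ (Fin k)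

/-- A set `E ⊆ ℝ × ℕ` is a compact hybrid time domain if
`E = ⋃_{j=0}^{J} ([t_j, t_{j+1}] × {j})` for some `J ∈ ℕ` and a finite nondecreasing
sequence `0 = t_0 ≤ t_1 ≤ ... ≤ t_{J+1}`. -/
def IsCompactHTD (E : Set (ℝ × ℕ)) : Prop :=
  ∃ (J : ℕ) (t : ℕ → ℝ), t 0 = 0 ∧ (∀ i, i ≤ J → t i ≤ t (i + 1)) ∧
    E = ⋃ j ∈ Finset.range (J + 1), Set.Icc (t j) (t (j + 1)) ×ˢ ({j} : Set ℕ)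

/-- A hybrid time domain is the union of a nondecreasing sequence of compact
hybrid time domains. -/
def IsHTD (E : Set (ℝ × ℕ)) : Prop :=
  ∃ F : ℕ → Set (ℝ × ℕ), (∀ k, IsCompactHTD (F k)) ∧ Monotone F ∧ E = ⋃ k, F k

/-- The time slice `I^j = {t : (t,j) ∈ E}`. -/
def Slice (E : Set (ℝ × ℕ)) (j : ℕ) : Set ℝ := {t | (t, j) ∈ E}

/-- `(T,J) = max E` for a (compact) hybrid time domain `E`. -/
def IsMaxOf (E : Set (ℝ × ℕ)) (T : ℝ) (J : ℕ) : Prop :=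
  (T, J) ∈ E ∧ ∀ p ∈ E, p.1 ≤ T ∧ p.2 ≤ J

/-- `s` is Lebesgue measurable on `S`: preimages (within `S`) of open sets are
Lebesgue measurable subsets of `ℝ`. -/
def LebesgueMeasurableOn {k : ℕ} (s : ℝ → Vec k) (S : Set ℝ) : Prop :=
  ∀ U : Set (Vec k), IsOpen U → NullMeasurableSet {t | t ∈ S ∧ s t ∈ U} volume

/-- `s` is locally essentially bounded on `S`. -/
def LocallyEssBddOn {k : ℕ} (s : ℝ → Vec k) (S : Set ℝ) : Prop :=
  ∀ r ∈ S, ∃ U : Set ℝ, IsOpen U ∧ r ∈ U ∧ ∃ c : ℝ, 0 ≤ c ∧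
    ∀ᵐ t ∂(volume.restrict (U ∩ S)), ‖s t‖ ≤ c

/-- `s` is absolutely continuous on `[a,b]`: for each `ε > 0` there is `δ > 0` such
that every countable collection of disjoint subintervals of `[a,b]` of total length
at most `δ` has total variation of `s` at most `ε`. -/
def AbsContOn {k : ℕ} (s : ℝ → Vec k) (a b : ℝ) : Prop :=
  ∀ ε : ℝ, 0 < ε → ∃ δ : ℝ, 0 < δ ∧ ∀ I : ℕ → ℝ × ℝ,
    (∀ i, a ≤ (I i).1 ∧ (I i).1 ≤ (I i).2 ∧ (I i).2 ≤ b) →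
    (∀ i i', i ≠ i' → Disjoint (Set.Ioo (I i).1 (I i).2) (Set.Ioo (I i').1 (I i').2)) →
    (∑' i, ((I i).2 - (I i).1)) ≤ δ →
    (∑' i, ‖s (I i).2 - s (I i).1‖) ≤ ε

/-- `s` is locally absolutely continuous on `S`: absolutely continuous on every
compact subinterval of `S`. -/
def LocAbsContOn {k : ℕ} (s : ℝ → Vec k) (S : Set ℝ) : Prop :=
  ∀ a b : ℝ, a ≤ b → Set.Icc a b ⊆ S → AbsContOn s a b

/-- `s` is locally bounded on `S`. -/
def LocallyBoundedOn {k : ℕ} (s : ℝ → Vec k) (S : Set ℝ) : Prop :=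
  ∀ t₀ ∈ S, ∃ A ∈ nhds t₀, ∃ M : ℝ, 0 < M ∧ ∀ t ∈ A ∩ S, ‖s t‖ ≤ M

/-- A hybrid input: a function on a hybrid time domain `E` that is Lebesgue measurable
and locally essentially bounded on each time slice. -/
def IsHybridInput {m : ℕ} (υ : ℝ → ℕ → Vec m) (E : Set (ℝ × ℕ)) : Prop :=
  IsHTD E ∧ ∀ j : ℕ,
    LebesgueMeasurableOn (fun t => υ t j) (Slice E j) ∧
    LocallyEssBddOn (fun t => υ t j) (Slice E j)

/-- A hybrid arc: a function on a hybrid time domain `E` that is locally absolutely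
continuous on each time slice. -/
def IsHybridArc {n : ℕ} (φ : ℝ → ℕ → Vec n) (E : Set (ℝ × ℕ)) : Prop :=
  IsHTD E ∧ ∀ j : ℕ, LocAbsContOn (fun t => φ t j) (Slice E j)

/-- A hybrid system `H = (C, f, D, g)`. -/
structure HybridSystem (n m : ℕ) where
  C : Set (Vec n × Vec m)
  f : Vec n × Vec m → Vec n
  D : Set (Vec n × Vec m)
  g : Vec n × Vec m → Vec n

/-- `(φ, υ)` with common domain `E` is a solution pair to `H`. -/
def IsSolutionPair {n m : ℕ} (H : HybridSystem n m)
    (φ : ℝ → ℕ → Vec n) (υ : ℝ → ℕ → Vec m) (E : Set (ℝ × ℕ)) : Prop :=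
  IsHybridArc φ E ∧ IsHybridInput υ E ∧
  (φ 0 0, υ 0 0) ∈ closure H.C ∪ H.D ∧
  (∀ j : ℕ, (interior (Slice E j)).Nonempty →
    (∀ t ∈ interior (Slice E j), (φ t j, υ t j) ∈ H.C) ∧
    (∀ᵐ t ∂(volume.restrict (Slice E j)),
      HasDerivWithinAt (fun s => φ s j) (H.f (φ t j, υ t j)) (Slice E j) t)) ∧
  (∀ p : ℝ × ℕ, p ∈ E → (p.1, p.2 + 1) ∈ E →
    (φ p.1 p.2, υ p.1 p.2) ∈ H.D ∧ φ p.1 (p.2 + 1) = H.g (φ p.1 p.2, υ p.1 p.2))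

/-- Backward-in-time jump map `g^bw(x,u) = {z : x = g(z,u), (z,u) ∈ D}`. -/
def gbw {n m : ℕ} (H : HybridSystem n m) (x : Vec n) (u : Vec m) : Set (Vec n) :=
  {z | x = H.g (z, u) ∧ (z, u) ∈ H.D}

/-- Backward-in-time jump set `D^bw`. -/
def Dbw {n m : ℕ} (H : HybridSystem n m) : Set (Vec n × Vec m) :=
  {p | ∃ z : Vec n, p.1 = H.g (z, p.2) ∧ (z, p.2) ∈ H.D}

/-- `(φ, υ)` with common domain `E` is a solution pair to the backward-in-time
system `H^bw = (C, -f, D^bw, g^bw)` of `H` (the jump inclusion is set-valued). -/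
def IsBwSolutionPair {n m : ℕ} (H : HybridSystem n m)
    (φ : ℝ → ℕ → Vec n) (υ : ℝ → ℕ → Vec m) (E : Set (ℝ × ℕ)) : Prop :=
  IsHybridArc φ E ∧ IsHybridInput υ E ∧
  (φ 0 0, υ 0 0) ∈ closure H.C ∪ Dbw H ∧
  (∀ j : ℕ, (interior (Slice E j)).Nonempty →
    (∀ t ∈ interior (Slice E j), (φ t j, υ t j) ∈ H.C) ∧
    (∀ᵐ t ∂(volume.restrict (Slice E j)),
      HasDerivWithinAt (fun s => φ s j) (-(H.f (φ t j, υ t j))) (Slice E j) t)) ∧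
  (∀ p : ℝ × ℕ, p ∈ E → (p.1, p.2 + 1) ∈ E →
    (φ p.1 p.2, υ p.1 p.2) ∈ Dbw H ∧ φ p.1 (p.2 + 1) ∈ gbw H (φ p.1 p.2) (υ p.1 p.2))

/-- Minkowski sum `E + {(T,J)}`. -/
def Shift (E : Set (ℝ × ℕ)) (T : ℝ) (J : ℕ) : Set (ℝ × ℕ) :=
  {p | ∃ q ∈ E, p = (q.1 + T, q.2 + J)}

/-- `ψ` with domain `E` is the concatenation `ψ₁|ψ₂`, where `(T,J) = max E₁`. -/
def IsConcat {α : Type*} (T : ℝ) (J : ℕ)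
    (ψ₁ : ℝ → ℕ → α) (E₁ : Set (ℝ × ℕ))
    (ψ₂ : ℝ → ℕ → α) (E₂ : Set (ℝ × ℕ))
    (ψ : ℝ → ℕ → α) (E : Set (ℝ × ℕ)) : Prop :=
  E = E₁ ∪ Shift E₂ T J ∧
  (∀ p ∈ E₁, p ≠ (T, J) → ψ p.1 p.2 = ψ₁ p.1 p.2) ∧
  (∀ p ∈ Shift E₂ T J, ψ p.1 p.2 = ψ₂ (p.1 - T) (p.2 - J))

/-- Minkowski difference `{(T,J)} − E`. -/
def RevDom (E : Set (ℝ × ℕ)) (T : ℝ) (J : ℕ) : Set (ℝ × ℕ) :=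
  {p | ∃ q ∈ E, p = (T - q.1, J - q.2)}

/-- `(φ', υ')` with domain `E'` is the reversal of the compact pair `(φ, υ)` with
domain `E` and `(T,J) = max E`; `C` is the flow set used in the closure condition
on `υ'(0,0)`. -/
def IsReversal {n m : ℕ} (C : Set (Vec n × Vec m)) (T : ℝ) (J : ℕ)
    (φ : ℝ → ℕ → Vec n) (υ : ℝ → ℕ → Vec m) (E : Set (ℝ × ℕ))
    (φ' : ℝ → ℕ → Vec n) (υ' : ℝ → ℕ → Vec m) (E' : Set (ℝ × ℕ)) : Prop :=
  E' = RevDom E T J ∧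
  (∀ p ∈ E', φ' p.1 p.2 = φ (T - p.1) (J - p.2)) ∧
  (∀ j : ℕ, ∀ t ∈ interior (Slice E' j), υ' t j = υ (T - t) (J - j)) ∧
  ((interior (Slice E' 0)).Nonempty → (φ' 0 0, υ' 0 0) ∈ closure C) ∧
  (∀ p : ℝ × ℕ, p ∈ E' → (p.1, p.2 + 1) ∈ E' → υ' p.1 p.2 = υ (T - p.1) (J - (p.2 + 1)))

/-- Lipschitz flow assumption with constants `Kx, Ku`. -/
def LipschitzFlow {n m : ℕ} (H : HybridSystem n m) (Kx Ku : ℝ) : Prop :=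
  0 < Kx ∧ 0 < Ku ∧
  ∀ (x₀ x₁ : Vec n) (u₀ u₁ : Vec m),
    (x₀, u₀) ∈ H.C → (x₁, u₀) ∈ H.C → (x₀, u₁) ∈ H.C →
    ‖H.f (x₀, u₀) - H.f (x₁, u₀)‖ ≤ Kx * ‖x₀ - x₁‖ ∧
    ‖H.f (x₀, u₀) - H.f (x₀, u₁)‖ ≤ Ku * ‖u₀ - u₁‖

/-- Linearly bounded jump map assumption with constants `Kx, Ku`. -/
def LinearBoundedJump {n m : ℕ} (H : HybridSystem n m) (Kx Ku : ℝ) : Prop :=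
  0 < Kx ∧ 0 < Ku ∧
  ∀ (x₀ x₁ : Vec n) (u₀ u₁ : Vec m), (x₀, u₀) ∈ H.D → (x₁, u₁) ∈ H.D →
    ‖H.g (x₀, u₀) - H.g (x₁, u₁)‖ ≤ Kx * ‖x₀ - x₁‖ + Ku * ‖u₀ - u₁‖

/-- `φ` with domain `F ⊆ E'` is a reconstructed solution with input `υ'` (defined on
`E'`) and initial condition `x0`: it starts at `x0`, flows according to
`f(·, υ')` on each nondegenerate slice, and jumps according to `g(·, υ')`. -/
def IsReconSolution {n m : ℕ} (H : HybridSystem n m)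
    (υ' : ℝ → ℕ → Vec m) (E' : Set (ℝ × ℕ)) (x0 : Vec n)
    (φ : ℝ → ℕ → Vec n) (F : Set (ℝ × ℕ)) : Prop :=
  F ⊆ E' ∧ (0, 0) ∈ F ∧ φ 0 0 = x0 ∧ IsHTD F ∧
  (∀ j : ℕ, LocAbsContOn (fun t => φ t j) (Slice F j)) ∧
  (∀ j : ℕ, (interior (Slice F j)).Nonempty →
    ∀ᵐ t ∂(volume.restrict (Slice F j)),
      HasDerivWithinAt (fun s => φ s j) (H.f (φ t j, υ' t j)) (Slice F j) t) ∧
  (∀ p : ℝ × ℕ, p ∈ F → (p.1, p.2 + 1) ∈ F →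
    φ p.1 (p.2 + 1) = H.g (φ p.1 p.2, υ' p.1 p.2))

/-- A maximal reconstructed solution: one admitting no proper extension. -/
def IsMaximalRecon {n m : ℕ} (H : HybridSystem n m)
    (υ' : ℝ → ℕ → Vec m) (E' : Set (ℝ × ℕ)) (x0 : Vec n)
    (φ : ℝ → ℕ → Vec n) (F : Set (ℝ × ℕ)) : Prop :=
  IsReconSolution H υ' E' x0 φ F ∧
  ∀ (φ₂ : ℝ → ℕ → Vec n) (F₂ : Set (ℝ × ℕ)),
    IsReconSolution H υ' E' x0 φ₂ F₂ → F ⊆ F₂ →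
    (∀ p ∈ F, φ₂ p.1 p.2 = φ p.1 p.2) → F₂ = F

/-! On the slice `j`, the concatenation agrees with `φ₁` on the slice of `dom φ₁` (also at `(T, J)`,
because `φ₁ (T, J) = φ₂ (0, 0)`) and with `φ₂` shifted by `T` on the slice of the shifted domain.
The two slices meet only for `j = J`, where the first lies left and the second right of the common
time `T`. Absolute continuity on `[a, T]` and `[T, b]` gives it on `[a, b]`: cutting every interval
of a packing of `[a, b]` at `T` yields packings of `[a, T]` and `[T, b]` of the same total length,
whose variations together bound the variation of the original one. -/

theorem apply_sub_apply_eq_min_add_max {α M : Type*} [LinearOrder α] [AddCommGroup M]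
    (f : α → M) (x y c : α) :
    f y - f x = (f (min y c) - f (min x c)) + (f (max y c) - f (max x c)) := by
  rcases le_total x c with hx | hx <;> rcases le_total y c with hy | hy <;> simp [hx, hy]

theorem Ioo_min_min_subset {α : Type*} [LinearOrder α] (x y c : α) :
    Ioo (min x c) (min y c) ⊆ Ioo x y := by
  intro z ⟨h₁, h₂⟩
  simp only [mem_Ioo, min_lt_iff, lt_min_iff] at *
  grind

theorem Ioo_max_max_subset {α : Type*} [LinearOrder α] (x y c : α) :
    Ioo (max x c) (max y c) ⊆ Ioo x y := by
  intro z ⟨h₁, h₂⟩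
  simp only [mem_Ioo, max_lt_iff, lt_max_iff] at *
  grind

section AbsCont

open Function

variable {k : ℕ} {s s' : ℝ → Vec k} {S S₁ S₂ : Set ℝ} {a b c : ℝ}

def IsIntervalPacking (a b : ℝ) (I : ℕ → ℝ × ℝ) : Prop :=
  (∀ i, a ≤ (I i).1 ∧ (I i).1 ≤ (I i).2 ∧ (I i).2 ≤ b) ∧
    Pairwise (Disjoint on fun i => Ioo (I i).1 (I i).2)

theorem absContOn_iff : AbsContOn s a b ↔ ∀ ε : ℝ, 0 < ε → ∃ δ : ℝ, 0 < δ ∧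
    ∀ I : ℕ → ℝ × ℝ, IsIntervalPacking a b I → ∑' i, ((I i).2 - (I i).1) ≤ δ →
      ∑' i, ‖s (I i).2 - s (I i).1‖ ≤ ε := by
  simp only [AbsContOn, IsIntervalPacking, and_imp]
  rfl

theorem IsIntervalPacking.summable_length {I : ℕ → ℝ × ℝ} (hI : IsIntervalPacking a b I) :
    Summable fun i => (I i).2 - (I i).1 := by
  have hfin : ∑' i, volume (Ioo (I i).1 (I i).2) ≠ ⊤ := by
    rw [← measure_iUnion hI.2 fun _ => measurableSet_Ioo]
    refine ne_top_of_le_ne_top (measure_Icc_lt_top (μ := volume) (a := a) (b := b)).ne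
      (measure_mono ?_)
    exact iUnion_subset fun i => Ioo_subset_Icc_self.trans
      (Icc_subset_Icc (hI.1 i).1 (hI.1 i).2.2)
  simpa [Real.volume_Ioo, ENNReal.toReal_ofReal, (hI.1 _).2.1] using ENNReal.summable_toReal hfin

theorem IsIntervalPacking.padding {I : ℕ → ℝ × ℝ} (hI : IsIntervalPacking a b I) (hab : a ≤ b)
    (u : Finset ℕ) : IsIntervalPacking a b fun i => if i ∈ u then I i else (a, a) := by
  refine ⟨fun i => ?_, fun i i' hii' => ?_⟩
  · by_cases hi : i ∈ u <;> simp [hi, hI.1 i, hab]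
  · by_cases hi : i ∈ u <;> by_cases hi' : i' ∈ u <;> simp [onFun, hi, hi', hI.2 hii']

/-- `AbsContOn` only bounds `∑'`, which is `0` on a non-summable family; testing the finite
subfamilies, padded with empty intervals, shows that the family is in fact summable. -/
theorem AbsContOn.exists_summable (h : AbsContOn s a b) {ε : ℝ} (hε : 0 < ε) :
    ∃ δ : ℝ, 0 < δ ∧ ∀ I : ℕ → ℝ × ℝ, IsIntervalPacking a b I →
      ∑' i, ((I i).2 - (I i).1) ≤ δ →
      (Summable fun i => ‖s (I i).2 - s (I i).1‖) ∧ ∑' i, ‖s (I i).2 - s (I i).1‖ ≤ ε := by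
  obtain ⟨δ, hδ, hvar⟩ := absContOn_iff.1 h ε hε
  refine ⟨δ, hδ, fun I hI hlen => ?_⟩
  have hab : a ≤ b := (hI.1 0).1.trans ((hI.1 0).2.1.trans (hI.1 0).2.2)
  have hfin : ∀ u : Finset ℕ, ∑ i ∈ u, ‖s (I i).2 - s (I i).1‖ ≤ ε := by
    intro u
    have hsum : ∀ g : ℝ × ℝ → ℝ, g (a, a) = 0 →
        ∑' i, g (if i ∈ u then I i else (a, a)) = ∑ i ∈ u, g (I i) := fun g hg => by
      rw [tsum_eq_sum (s := u) fun i hi => by simp [hi, hg]]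
      exact Finset.sum_congr rfl fun i hi => by simp [hi]
    have hvar_u := hvar _ (hI.padding hab u)
    rw [hsum (fun p => p.2 - p.1) (sub_self a),
      hsum (fun p => ‖s p.2 - s p.1‖) (by simp)] at hvar_u
    exact hvar_u <|
      (hI.summable_length.sum_le_tsum u fun i _ => sub_nonneg.2 (hI.1 i).2.1).trans hlen
  exact ⟨summable_of_sum_le (fun _ => norm_nonneg _) hfin,
    Real.tsum_le_of_sum_le (fun _ => norm_nonneg _) hfin⟩

theorem AbsContOn.congr (h : AbsContOn s a b) (hss' : EqOn s' s (Icc a b)) : AbsContOn s' a b := by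
  intro ε hε
  obtain ⟨δ, hδ, hvar⟩ := h ε hε
  refine ⟨δ, hδ, fun I hI hd hlen => ?_⟩
  have hmem : ∀ i, (I i).1 ∈ Icc a b ∧ (I i).2 ∈ Icc a b := fun i =>
    ⟨⟨(hI i).1, (hI i).2.1.trans (hI i).2.2⟩, ⟨(hI i).1.trans (hI i).2.1, (hI i).2.2⟩⟩
  simpa only [hss' (hmem _).1, hss' (hmem _).2] using hvar I hI hd hlen

theorem AbsContOn.comp_sub_const (T : ℝ) (h : AbsContOn s (a - T) (b - T)) :
    AbsContOn (fun t => s (t - T)) a b := by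
  intro ε hε
  obtain ⟨δ, hδ, hvar⟩ := h ε hε
  refine ⟨δ, hδ, fun I hI hd hlen => hvar (fun i => ((I i).1 - T, (I i).2 - T))
    (fun i => ⟨by linarith [(hI i).1], by linarith [(hI i).2.1], by linarith [(hI i).2.2]⟩)
    (fun i i' hii' => ?_) (by simpa using hlen)⟩
  simpa only [preimage_add_const_Ioo] using (hd i i' hii').preimage (· + T)

theorem AbsContOn.union (h₁ : AbsContOn s a c) (h₂ : AbsContOn s c b) (hac : a ≤ c)
    (hcb : c ≤ b) : AbsContOn s a b := by
  rw [absContOn_iff]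
  intro ε hε
  obtain ⟨δ₁, hδ₁, H₁⟩ := h₁.exists_summable (half_pos hε)
  obtain ⟨δ₂, hδ₂, H₂⟩ := h₂.exists_summable (half_pos hε)
  refine ⟨min δ₁ δ₂, lt_min hδ₁ hδ₂, fun I hI hlen => ?_⟩
  set lo : ℕ → ℝ × ℝ := fun i => (min (I i).1 c, min (I i).2 c)
  set hi : ℕ → ℝ × ℝ := fun i => (max (I i).1 c, max (I i).2 c)
  have hlo : IsIntervalPacking a c lo :=
    ⟨fun i => ⟨le_min (hI.1 i).1 hac, min_le_min_right c (hI.1 i).2.1, min_le_right _ _⟩,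
      fun i i' hii' => (hI.2 hii').mono (Ioo_min_min_subset _ _ c) (Ioo_min_min_subset _ _ c)⟩
  have hhi : IsIntervalPacking c b hi :=
    ⟨fun i => ⟨le_max_right _ _, max_le_max_right c (hI.1 i).2.1, max_le (hI.1 i).2.2 hcb⟩,
      fun i i' hii' => (hI.2 hii').mono (Ioo_max_max_subset _ _ c) (Ioo_max_max_subset _ _ c)⟩
  have hlen_split : ∀ i, ((lo i).2 - (lo i).1) + ((hi i).2 - (hi i).1) = (I i).2 - (I i).1 :=
    fun i => (apply_sub_apply_eq_min_add_max id (I i).1 (I i).2 c).symm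
  have hvar_split : ∀ i, s (I i).2 - s (I i).1 =
      (s (lo i).2 - s (lo i).1) + (s (hi i).2 - s (hi i).1) :=
    fun i => apply_sub_apply_eq_min_add_max s (I i).1 (I i).2 c
  have hlo_nonneg : 0 ≤ ∑' i, ((lo i).2 - (lo i).1) :=
    tsum_nonneg fun i => sub_nonneg.2 (hlo.1 i).2.1
  have hhi_nonneg : 0 ≤ ∑' i, ((hi i).2 - (hi i).1) :=
    tsum_nonneg fun i => sub_nonneg.2 (hhi.1 i).2.1
  have hlen_tot : ∑' i, ((lo i).2 - (lo i).1) + ∑' i, ((hi i).2 - (hi i).1) ≤ min δ₁ δ₂ := by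
    rw [← hlo.summable_length.tsum_add hhi.summable_length]
    simpa only [hlen_split] using hlen
  obtain ⟨hs₁, hv₁⟩ := H₁ lo hlo (by linarith [min_le_left δ₁ δ₂])
  obtain ⟨hs₂, hv₂⟩ := H₂ hi hhi (by linarith [min_le_right δ₁ δ₂])
  have hbound : ∀ i, ‖s (I i).2 - s (I i).1‖ ≤
      ‖s (lo i).2 - s (lo i).1‖ + ‖s (hi i).2 - s (hi i).1‖ :=
    fun i => hvar_split i ▸ norm_add_le _ _
  calc ∑' i, ‖s (I i).2 - s (I i).1‖
      ≤ ∑' i, (‖s (lo i).2 - s (lo i).1‖ + ‖s (hi i).2 - s (hi i).1‖) :=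
        (Summable.of_nonneg_of_le (fun _ => norm_nonneg _) hbound (hs₁.add hs₂)).tsum_le_tsum
          hbound (hs₁.add hs₂)
    _ = ∑' i, ‖s (lo i).2 - s (lo i).1‖ + ∑' i, ‖s (hi i).2 - s (hi i).1‖ := hs₁.tsum_add hs₂
    _ ≤ ε := by linarith

theorem LocAbsContOn.mono (h : LocAbsContOn s S) (hS : S₁ ⊆ S) : LocAbsContOn s S₁ :=
  fun a b hab hsub => h a b hab (hsub.trans hS)

theorem LocAbsContOn.congr (h : LocAbsContOn s S) (hss' : EqOn s' s S) : LocAbsContOn s' S :=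
  fun a b hab hsub => (h a b hab hsub).congr (hss'.mono hsub)

theorem LocAbsContOn.comp_sub_const (T : ℝ) (h : LocAbsContOn s S) :
    LocAbsContOn (fun t => s (t - T)) ((· - T) ⁻¹' S) := by
  refine fun a b hab hsub => (h (a - T) (b - T) (by linarith) ?_).comp_sub_const T
  rw [← image_sub_const_Icc]
  exact image_subset_iff.2 hsub

theorem LocAbsContOn.union_of_le (h₁ : LocAbsContOn s S₁) (h₂ : LocAbsContOn s S₂)
    (hS₁ : S₁ ⊆ Iic c) (hS₂ : S₂ ⊆ Ici c) (hc₁ : c ∈ S₁) (hc₂ : c ∈ S₂) :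
    LocAbsContOn s (S₁ ∪ S₂) := by
  have hIic : (S₁ ∪ S₂) ∩ Iic c ⊆ S₁ := fun t ⟨ht, htc⟩ => by
    rcases (mem_Iic.1 htc).eq_or_lt with rfl | htc
    · exact hc₁
    · exact ht.resolve_right fun ht₂ => (hS₂ ht₂).not_gt htc
  have hIci : (S₁ ∪ S₂) ∩ Ici c ⊆ S₂ := fun t ⟨ht, hct⟩ => by
    rcases (mem_Ici.1 hct).eq_or_lt with rfl | hct
    · exact hc₂
    · exact ht.resolve_left fun ht₁ => (hS₁ ht₁).not_gt hct
  intro a b hab hsub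
  rcases le_total b c with hbc | hcb
  · exact h₁ a b hab
      ((subset_inter hsub (Icc_subset_Iic_self.trans (Iic_subset_Iic.2 hbc))).trans hIic)
  rcases le_total c a with hca | hac
  · exact h₂ a b hab
      ((subset_inter hsub (Icc_subset_Ici_self.trans (Ici_subset_Ici.2 hca))).trans hIci)
  exact (h₁ a c hac ((subset_inter ((Icc_subset_Icc_right hcb).trans hsub)
      Icc_subset_Iic_self).trans hIic)).union
    (h₂ c b hcb ((subset_inter ((Icc_subset_Icc_left hac).trans hsub)
      Icc_subset_Ici_self).trans hIci)) hac hcb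

end AbsCont

theorem IsCompactHTD.nonneg {E : Set (ℝ × ℕ)} (hE : IsCompactHTD E) : ∀ p ∈ E, 0 ≤ p.1 := by
  obtain ⟨J, t, h0, hmono, rfl⟩ := hE
  have ht : ∀ i ≤ J + 1, 0 ≤ t i := by
    intro i
    induction i with
    | zero => exact fun _ => h0.ge
    | succ i ih => exact fun hi => (ih (by omega)).trans (hmono i (by omega))
  intro p hp
  simp only [mem_iUnion, Finset.mem_range, mem_prod, mem_Icc] at hp
  obtain ⟨i, hi, ⟨hti, -⟩, -⟩ := hp
  exact (ht i (by omega)).trans hti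

theorem IsCompactHTD.zero_mem {E : Set (ℝ × ℕ)} (hE : IsCompactHTD E) : ((0 : ℝ), 0) ∈ E := by
  obtain ⟨J, t, h0, hmono, rfl⟩ := hE
  exact mem_biUnion (x := 0) (by simp) ⟨⟨h0.le, h0 ▸ hmono 0 J.zero_le⟩, rfl⟩

theorem IsHTD.nonneg {E : Set (ℝ × ℕ)} (hE : IsHTD E) : ∀ p ∈ E, 0 ≤ p.1 := by
  obtain ⟨F, hF, -, rfl⟩ := hE
  intro p hp
  obtain ⟨k, hk⟩ := mem_iUnion.1 hp
  exact (hF k).nonneg p hk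

theorem IsHTD.zero_mem {E : Set (ℝ × ℕ)} (hE : IsHTD E) : ((0 : ℝ), 0) ∈ E := by
  obtain ⟨F, hF, -, rfl⟩ := hE
  exact mem_iUnion.2 ⟨0, (hF 0).zero_mem⟩

theorem mem_slice_shift {E : Set (ℝ × ℕ)} {T t : ℝ} {J j : ℕ} :
    t ∈ Slice (Shift E T J) j ↔ J ≤ j ∧ t - T ∈ Slice E (j - J) := by
  simp only [Slice, Shift, mem_ofPred_eq]
  constructor
  · rintro ⟨q, hq, hqe⟩
    obtain ⟨rfl, rfl⟩ := Prod.mk.inj hqe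
    exact ⟨by omega, by simpa using hq⟩
  · rintro ⟨hJj, ht⟩
    exact ⟨_, ht, by simp [hJj]⟩

theorem IsConcat.apply_of_mem_left {α : Type*} {T : ℝ} {J : ℕ} {ψ₁ ψ₂ ψ : ℝ → ℕ → α}
    {E₁ E₂ E : Set (ℝ × ℕ)} (h : IsConcat T J ψ₁ E₁ ψ₂ E₂ ψ E) (h₀ : ((0 : ℝ), 0) ∈ E₂)
    (hend : ψ₁ T J = ψ₂ 0 0) {p : ℝ × ℕ} (hp : p ∈ E₁) : ψ p.1 p.2 = ψ₁ p.1 p.2 := by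
  by_cases hpTJ : p = (T, J)
  · subst hpTJ
    simpa [hend] using h.2.2 (T, J) ⟨(0, 0), h₀, by simp⟩
  · exact h.2.1 p hp hpTJ

theorem concat_arc_loc_abs_cont_general {n : ℕ}
    (φ₁ φ₂ φ : ℝ → ℕ → Vec n) (E₁ E₂ E : Set (ℝ × ℕ)) (T : ℝ) (J : ℕ)
    (h₁ : IsHybridArc φ₁ E₁)
    (h₂ : IsHybridArc φ₂ E₂)
    (hmax : IsMaxOf E₁ T J)
    (hend : φ₁ T J = φ₂ 0 0)
    (hcat : IsConcat T J φ₁ E₁ φ₂ E₂ φ E) :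
    ∀ j : ℕ, LocAbsContOn (fun t => φ t j) (Slice E j) := by
  intro j
  have hslice : Slice E j = Slice E₁ j ∪ Slice (Shift E₂ T J) j := by rw [hcat.1]; rfl
  have hleft : LocAbsContOn (fun t => φ t j) (Slice E₁ j) :=
    (h₁.2 j).congr fun t ht => hcat.apply_of_mem_left h₂.1.zero_mem hend ht
  have hright : LocAbsContOn (fun t => φ t j) (Slice (Shift E₂ T J) j) :=
    (((h₂.2 (j - J)).comp_sub_const T).mono fun t ht => (mem_slice_shift.1 ht).2).congr
      fun t ht => hcat.2.2 (t, j) ht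
  rw [hslice]
  rcases lt_trichotomy j J with hj | rfl | hj
  · exact hleft.mono <| union_subset subset_rfl
      fun t ht => absurd (mem_slice_shift.1 ht).1 hj.not_ge
  · exact hleft.union_of_le hright (fun t ht => (hmax.2 _ ht).1)
      (fun t ht => sub_nonneg.1 (h₂.1.nonneg _ (mem_slice_shift.1 ht).2)) hmax.1
      (mem_slice_shift.2 ⟨le_rfl, by simpa [Slice] using h₂.1.zero_mem⟩)
  · exact hright.mono <| union_subset (fun t ht => absurd (hmax.2 _ ht).2 hj.not_ge) subset_rfl

/-- Lemma 8: if `φ₁` and `φ₂` are hybrid arcs with `φ₁(T,J) = φ₂(0,0)` where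
`(T,J) = max dom φ₁`, the concatenation `φ = φ₁|φ₂` is locally absolutely continuous
on each time slice `I^j_φ` of its domain. -/
theorem concat_arc_loc_abs_cont {n : ℕ}
    (φ₁ φ₂ φ : ℝ → ℕ → Vec n) (E₁ E₂ E : Set (ℝ × ℕ)) (T : ℝ) (J : ℕ)
    (h₁ : IsHybridArc φ₁ E₁)
    (h₂ : IsHybridArc φ₂ E₂)
    (hcpt : IsCompactHTD E₁)
    (hmax : IsMaxOf E₁ T J)
    (hend : φ₁ T J = φ₂ 0 0)
    (hcat : IsConcat T J φ₁ E₁ φ₂ E₂ φ E) :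
    ∀ j : ℕ, LocAbsContOn (fun t => φ t j) (Slice E j) :=
  concat_arc_loc_abs_cont_general φ₁ φ₂ φ E₁ E₂ E T J h₁ h₂ hmax hend hcat
end
end

section
/- Let φ₁ and φ₂ be hybrid arcs with dom φ₁ a compact hybrid time domain, such that φ₁(T,J) = φ₂(0,0) where (T,J) = max dom φ₁. Then their concatenation φ = φ₁|φ₂ is a hybrid arc, i.e., dom φ is a hybrid time domain and for each j ∈ ℕ, t ↦ φ(t,j) is locally absolutely continuous on I^j_φ := {t : (t,j) ∈ dom φ}. -/
open MeasureTheory Set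

noncomputable section

section AuxLemmas

variable {k : ℕ}

lemma absContOn_congr {s g : ℝ → Vec k} {a b : ℝ}
    (h : ∀ t ∈ Set.Icc a b, s t = g t) (hg : AbsContOn g a b) : AbsContOn s a b := by
  intro ε hε
  obtain ⟨δ, hδ, hb⟩ := hg ε hε
  refine ⟨δ, hδ, fun I hI hd hl => ?_⟩
  have := hb I hI hd hl
  have he : ∀ i, ‖s (I i).2 - s (I i).1‖ = ‖g (I i).2 - g (I i).1‖ := by
    intro i
    rw [h _ ⟨le_trans (hI i).1 (hI i).2.1, (hI i).2.2⟩,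
       h _ ⟨(hI i).1, le_trans (hI i).2.1 (hI i).2.2⟩]
  rw [tsum_congr he]
  exact this

lemma absContOn_translate {s : ℝ → Vec k} (a b T : ℝ) (h : AbsContOn s (a - T) (b - T)) :
    AbsContOn (fun t => s (t - T)) a b := by
  intro ε hε
  obtain ⟨δ, hδ, hb⟩ := h ε hε
  refine ⟨δ, hδ, fun I hI hd hl => ?_⟩
  have := hb (fun i => ((I i).1 - T, (I i).2 - T)) ?_ ?_ ?_
  · simpa using this
  · intro i
    obtain ⟨h1, h2, h3⟩ := hI i
    dsimp only
    exact ⟨by linarith, by linarith, by linarith⟩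
  · intro i i' hne
    have := hd i i' hne
    rw [Set.disjoint_left] at this ⊢
    intro x hx hx'
    simp only [Set.mem_Ioo] at hx hx'
    exact this (a := x + T) ⟨by linarith [hx.1], by linarith [hx.2]⟩
      ⟨by linarith [hx'.1], by linarith [hx'.2]⟩
  · simpa using hl

lemma summable_lengths {a b : ℝ} (I : ℕ → ℝ × ℝ)
    (hI : ∀ i, a ≤ (I i).1 ∧ (I i).1 ≤ (I i).2 ∧ (I i).2 ≤ b)
    (hd : ∀ i i', i ≠ i' → Disjoint (Set.Ioo (I i).1 (I i).2) (Set.Ioo (I i').1 (I i').2)) :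
    Summable (fun i => (I i).2 - (I i).1) := by
  have hab : a ≤ b := le_trans (hI 0).1 (le_trans (hI 0).2.1 (hI 0).2.2)
  apply summable_of_sum_range_le (c := b - a) (fun i => by linarith [(hI i).2.1])
  intro nn
  have key : volume (⋃ i ∈ Finset.range nn, Set.Ioo (I i).1 (I i).2)
      = ∑ i ∈ Finset.range nn, volume (Set.Ioo (I i).1 (I i).2) := by
    apply measure_biUnion_finset
    · intro i _ i' _ hne
      exact hd i i' hne
    · intro i _
      exact measurableSet_Ioo
  have hsub : (⋃ i ∈ Finset.range nn, Set.Ioo (I i).1 (I i).2) ⊆ Set.Icc a b := by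
    intro x hx
    simp only [Set.mem_iUnion] at hx
    obtain ⟨i, _, hx⟩ := hx
    exact ⟨le_trans (hI i).1 (le_of_lt hx.1), le_trans (le_of_lt hx.2) (hI i).2.2⟩
  have h1 : ∑ i ∈ Finset.range nn, ENNReal.ofReal ((I i).2 - (I i).1)
      ≤ ENNReal.ofReal (b - a) := by
    calc ∑ i ∈ Finset.range nn, ENNReal.ofReal ((I i).2 - (I i).1)
        = ∑ i ∈ Finset.range nn, volume (Set.Ioo (I i).1 (I i).2) := by
          simp [Real.volume_Ioo]
      _ = volume (⋃ i ∈ Finset.range nn, Set.Ioo (I i).1 (I i).2) := key.symm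
      _ ≤ volume (Set.Icc a b) := measure_mono hsub
      _ = ENNReal.ofReal (b - a) := Real.volume_Icc
  rw [← ENNReal.ofReal_sum_of_nonneg (fun i _ => by linarith [(hI i).2.1])] at h1
  exact (ENNReal.ofReal_le_ofReal_iff (by linarith)).mp h1

lemma min_sub_min_le {x y T : ℝ} (hxy : x ≤ y) : min y T - min x T ≤ y - x := by
  rcases le_total y T with h | h
  · rw [min_eq_left h, min_eq_left (hxy.trans h)]
  · rcases le_total x T with h' | h'
    · rw [min_eq_right h, min_eq_left h']; linarith
    · rw [min_eq_right h, min_eq_right h']; linarith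

lemma max_sub_max_le {x y T : ℝ} (hxy : x ≤ y) : max y T - max x T ≤ y - x := by
  rcases le_total y T with h | h
  · rw [max_eq_right h, max_eq_right (hxy.trans h)]; linarith
  · rcases le_total x T with h' | h'
    · rw [max_eq_left h, max_eq_right h']; linarith
    · rw [max_eq_left h, max_eq_left h']

lemma norm_split (f : ℝ → Vec k) {x y T : ℝ} (hxy : x ≤ y) :
    ‖f y - f x‖ ≤ ‖f (min y T) - f (min x T)‖ + ‖f (max y T) - f (max x T)‖ := by
  rcases le_total y T with h | h
  · rw [min_eq_left h, min_eq_left (hxy.trans h), max_eq_right h, max_eq_right (hxy.trans h)]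
    simp
  · rcases le_total x T with h' | h'
    · rw [min_eq_right h, min_eq_left h', max_eq_left h, max_eq_right h']
      have hsplit : f y - f x = (f T - f x) + (f y - f T) := by abel
      calc ‖f y - f x‖ = ‖(f T - f x) + (f y - f T)‖ := by rw [← hsplit]
        _ ≤ ‖f T - f x‖ + ‖f y - f T‖ := norm_add_le _ _
    · rw [min_eq_right h, min_eq_right h', max_eq_left h, max_eq_left h']
      simp

lemma ioo_min_subset {x y T : ℝ} : Set.Ioo (min x T) (min y T) ⊆ Set.Ioo x y := by
  intro z hz
  obtain ⟨hz1, hz2⟩ := hz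
  rw [lt_min_iff] at hz2
  rw [min_lt_iff] at hz1
  exact ⟨hz1.resolve_right (fun hT => absurd hz2.2 (not_lt.mpr hT.le)), hz2.1⟩

lemma ioo_max_subset {x y T : ℝ} : Set.Ioo (max x T) (max y T) ⊆ Set.Ioo x y := by
  intro z hz
  obtain ⟨hz1, hz2⟩ := hz
  rw [max_lt_iff] at hz1
  rw [lt_max_iff] at hz2
  exact ⟨hz1.1, hz2.resolve_right (fun hT => absurd hz1.2 (not_lt.mpr hT.le))⟩

lemma absContOn_glue {s : ℝ → Vec k} {a b T : ℝ} (haT : a ≤ T) (hTb : T ≤ b)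
    (h1 : AbsContOn s a T) (h2 : AbsContOn s T b) : AbsContOn s a b := by
  intro ε hε
  obtain ⟨δ₁, hδ₁, hb₁⟩ := h1 (ε / 2) (by linarith)
  obtain ⟨δ₂, hδ₂, hb₂⟩ := h2 (ε / 2) (by linarith)
  refine ⟨min δ₁ δ₂, lt_min hδ₁ hδ₂, fun I hI hd hl => ?_⟩
  have hsum := summable_lengths I hI hd
  apply tsum_le_of_sum_le' (le_of_lt hε)
  intro F
  classical
  set L : ℕ → ℝ × ℝ := fun i =>
    if i ∈ F then (min (I i).1 T, min (I i).2 T) else (a, a) with hL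
  set R : ℕ → ℝ × ℝ := fun i =>
    if i ∈ F then (max (I i).1 T, max (I i).2 T) else (T, T) with hR
  have hlF : ∑ i ∈ F, ((I i).2 - (I i).1) ≤ min δ₁ δ₂ :=
    le_trans (Summable.sum_le_tsum F (fun i _ => by linarith [(hI i).2.1]) hsum) hl
  have hLmem : ∀ i, a ≤ (L i).1 ∧ (L i).1 ≤ (L i).2 ∧ (L i).2 ≤ T := by
    intro i
    simp only [hL]
    split
    · exact ⟨le_min (hI i).1 haT, min_le_min (hI i).2.1 le_rfl, min_le_right _ _⟩
    · exact ⟨le_rfl, le_rfl, haT⟩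
  have hRmem : ∀ i, T ≤ (R i).1 ∧ (R i).1 ≤ (R i).2 ∧ (R i).2 ≤ b := by
    intro i
    simp only [hR]
    split
    · exact ⟨le_max_right _ _, max_le_max (hI i).2.1 le_rfl, max_le (hI i).2.2 hTb⟩
    · exact ⟨le_rfl, le_rfl, hTb⟩
  have hLd : ∀ i i', i ≠ i' → Disjoint (Set.Ioo (L i).1 (L i).2) (Set.Ioo (L i').1 (L i').2) := by
    intro i i' hne
    by_cases hi : i ∈ F <;> by_cases hi' : i' ∈ F <;> simp only [hL, hi, hi', if_true, if_false]
    · exact (hd i i' hne).mono ioo_min_subset ioo_min_subset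
    all_goals simp
  have hRd : ∀ i i', i ≠ i' → Disjoint (Set.Ioo (R i).1 (R i).2) (Set.Ioo (R i').1 (R i').2) := by
    intro i i' hne
    by_cases hi : i ∈ F <;> by_cases hi' : i' ∈ F <;> simp only [hR, hi, hi', if_true, if_false]
    · exact (hd i i' hne).mono ioo_max_subset ioo_max_subset
    all_goals simp
  have hLlen : (∑' i, ((L i).2 - (L i).1)) ≤ δ₁ := by
    rw [tsum_eq_sum (s := F) (fun i hi => by simp [hL, hi])]
    calc ∑ i ∈ F, ((L i).2 - (L i).1)
        ≤ ∑ i ∈ F, ((I i).2 - (I i).1) := by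
          apply Finset.sum_le_sum
          intro i hi
          simp only [hL, hi, if_true]
          exact min_sub_min_le (hI i).2.1
      _ ≤ min δ₁ δ₂ := hlF
      _ ≤ δ₁ := min_le_left _ _
  have hRlen : (∑' i, ((R i).2 - (R i).1)) ≤ δ₂ := by
    rw [tsum_eq_sum (s := F) (fun i hi => by simp [hR, hi])]
    calc ∑ i ∈ F, ((R i).2 - (R i).1)
        ≤ ∑ i ∈ F, ((I i).2 - (I i).1) := by
          apply Finset.sum_le_sum
          intro i hi
          simp only [hR, hi, if_true]
          exact max_sub_max_le (hI i).2.1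
      _ ≤ min δ₁ δ₂ := hlF
      _ ≤ δ₂ := min_le_right _ _
  have hLvar := hb₁ L hLmem hLd hLlen
  have hRvar := hb₂ R hRmem hRd hRlen
  rw [tsum_eq_sum (s := F) (fun i hi => by simp [hL, hi])] at hLvar
  rw [tsum_eq_sum (s := F) (fun i hi => by simp [hR, hi])] at hRvar
  calc ∑ i ∈ F, ‖s (I i).2 - s (I i).1‖
      ≤ ∑ i ∈ F, (‖s (L i).2 - s (L i).1‖ + ‖s (R i).2 - s (R i).1‖) := by
        apply Finset.sum_le_sum
        intro i hi
        simp only [hL, hR, hi, if_true]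
        exact norm_split s (hI i).2.1
    _ = (∑ i ∈ F, ‖s (L i).2 - s (L i).1‖) + ∑ i ∈ F, ‖s (R i).2 - s (R i).1‖ :=
        Finset.sum_add_distrib
    _ ≤ ε / 2 + ε / 2 := add_le_add hLvar hRvar
    _ = ε := by ring

end AuxLemmas
section HTDLemmas

lemma shift_mem {E : Set (ℝ × ℕ)} {T : ℝ} {J : ℕ} {τ : ℝ} {j : ℕ} :
    (τ, j) ∈ Shift E T J ↔ J ≤ j ∧ (τ - T, j - J) ∈ E := by
  constructor
  · rintro ⟨q, hq, heq⟩
    have h1 : τ = q.1 + T := congrArg Prod.fst heq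
    have h2 : j = q.2 + J := congrArg Prod.snd heq
    refine ⟨by omega, ?_⟩
    have : (τ - T, j - J) = q := by
      rw [h1, h2]; simp
    rw [this]; exact hq
  · rintro ⟨hJ, hq⟩
    refine ⟨(τ - T, j - J), hq, ?_⟩
    simp only [Prod.mk.injEq]
    exact ⟨by ring, by omega⟩

lemma shift_iUnion {F : ℕ → Set (ℝ × ℕ)} {T : ℝ} {J : ℕ} :
    Shift (⋃ k, F k) T J = ⋃ k, Shift (F k) T J := by
  ext p
  simp only [Shift, Set.mem_iUnion, Set.mem_setOf_eq]
  constructor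
  · rintro ⟨q, ⟨i, hq⟩, hp⟩; exact ⟨i, q, hq, hp⟩
  · rintro ⟨i, q, hq, hp⟩; exact ⟨q, ⟨i, hq⟩, hp⟩

lemma shift_mono {A B : Set (ℝ × ℕ)} {T : ℝ} {J : ℕ} (h : A ⊆ B) :
    Shift A T J ⊆ Shift B T J := by
  rintro p ⟨q, hq, hp⟩; exact ⟨q, h hq, hp⟩

lemma mem_htdUnion {t : ℕ → ℝ} {K : ℕ} {τ : ℝ} {j : ℕ} :
    (τ, j) ∈ ⋃ j' ∈ Finset.range (K + 1), Set.Icc (t j') (t (j' + 1)) ×ˢ ({j'} : Set ℕ) ↔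
    j ≤ K ∧ t j ≤ τ ∧ τ ≤ t (j + 1) := by
  simp only [Set.mem_iUnion, Finset.mem_range, Set.mem_prod, Set.mem_Icc,
    Set.mem_singleton_iff]
  constructor
  · rintro ⟨i, hi, ⟨h1, h2⟩, rfl⟩
    exact ⟨by omega, h1, h2⟩
  · rintro ⟨hj, h1, h2⟩
    exact ⟨j, by omega, ⟨h1, h2⟩, rfl⟩

lemma zero_mem_compactHTD {F : Set (ℝ × ℕ)} (h : IsCompactHTD F) : (0, 0) ∈ F := by
  obtain ⟨K, s, hs0, hsm, rfl⟩ := h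
  rw [mem_htdUnion]
  refine ⟨Nat.zero_le _, le_of_eq hs0, ?_⟩
  have := hsm 0 (Nat.zero_le _)
  rw [hs0] at this
  exact this

lemma compactHTD_nonneg {F : Set (ℝ × ℕ)} (h : IsCompactHTD F) : ∀ p ∈ F, 0 ≤ p.1 := by
  obtain ⟨K, s, hs0, hsm, rfl⟩ := h
  have hnn : ∀ i, i ≤ K + 1 → 0 ≤ s i := by
    intro i
    induction i with
    | zero => intro _; exact le_of_eq hs0.symm
    | succ m ih => intro hi; exact le_trans (ih (by omega)) (hsm m (by omega))
  rintro ⟨τ, j⟩ hp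
  rw [mem_htdUnion] at hp
  exact le_trans (hnn j (by omega)) hp.2.1

lemma compact_max_struct {E₁ : Set (ℝ × ℕ)} {T : ℝ} {J : ℕ}
    (hcpt : IsCompactHTD E₁) (hmax : IsMaxOf E₁ T J) :
    ∃ t : ℕ → ℝ, t 0 = 0 ∧ (∀ i, i ≤ J → t i ≤ t (i + 1)) ∧ T = t (J + 1) ∧
      E₁ = ⋃ j ∈ Finset.range (J + 1), Set.Icc (t j) (t (j + 1)) ×ˢ ({j} : Set ℕ) := by
  obtain ⟨K, t, ht0, htm, hE⟩ := hcpt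
  have hTJ : (T, J) ∈ E₁ := hmax.1
  rw [hE, mem_htdUnion] at hTJ
  have hJK : K ≤ J := by
    have hmem : (t K, K) ∈ E₁ := by
      rw [hE, mem_htdUnion]
      exact ⟨le_rfl, le_rfl, htm K le_rfl⟩
    exact (hmax.2 _ hmem).2
  have hKJ : J = K := le_antisymm hTJ.1 hJK
  subst hKJ
  have hTmem : (t (J + 1), J) ∈ E₁ := by
    rw [hE, mem_htdUnion]
    exact ⟨le_rfl, htm J le_rfl, le_rfl⟩
  have hTeq : T = t (J + 1) := le_antisymm hTJ.2.2 (hmax.2 _ hTmem).1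
  exact ⟨t, ht0, htm, hTeq, hE⟩

lemma union_shift_compact {t : ℕ → ℝ} {J : ℕ} {T : ℝ}
    (ht0 : t 0 = 0) (htm : ∀ i, i ≤ J → t i ≤ t (i + 1)) (hT : T = t (J + 1))
    {F : Set (ℝ × ℕ)} (hF : IsCompactHTD F) :
    IsCompactHTD ((⋃ j ∈ Finset.range (J + 1),
      Set.Icc (t j) (t (j + 1)) ×ˢ ({j} : Set ℕ)) ∪ Shift F T J) := by
  obtain ⟨K, s, hs0, hsm, rfl⟩ := hF
  refine ⟨J + K, fun i => if i ≤ J then t i else s (i - J) + T, by simp [ht0], ?_, ?_⟩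
  · intro i hi
    rcases lt_trichotomy i J with h | rfl | h
    · simp only [if_pos h.le, if_pos (by omega : i + 1 ≤ J)]
      exact htm i h.le
    · simp only [if_pos le_rfl, if_neg (by omega : ¬ i + 1 ≤ i)]
      have h1 : t i ≤ T := hT ▸ htm i le_rfl
      have h2 : (0:ℝ) ≤ s 1 := hs0 ▸ hsm 0 (Nat.zero_le _)
      have h3 : i + 1 - i = 1 := by omega
      rw [h3]
      linarith
    · simp only [if_neg (by omega : ¬ i ≤ J), if_neg (by omega : ¬ i + 1 ≤ J)]
      have h3 : i + 1 - J = (i - J) + 1 := by omega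
      rw [h3]
      have := hsm (i - J) (by omega)
      linarith
  · ext ⟨τ, j⟩
    rw [Set.mem_union, mem_htdUnion, mem_htdUnion, shift_mem, mem_htdUnion]
    rcases lt_trichotomy j J with h | rfl | h
    · simp only [if_pos h.le, if_pos (by omega : j + 1 ≤ J)]
      constructor
      · rintro (⟨_, h1, h2⟩ | ⟨hJ, _⟩)
        · exact ⟨by omega, h1, h2⟩
        · omega
      · rintro ⟨_, h1, h2⟩
        exact Or.inl ⟨h.le, h1, h2⟩
    · simp only [if_pos le_rfl, if_neg (by omega : ¬ j + 1 ≤ j)]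
      have h1 : t j ≤ T := hT ▸ htm j le_rfl
      have h2 : (0:ℝ) ≤ s 1 := hs0 ▸ hsm 0 (Nat.zero_le _)
      have h3 : j + 1 - j = 1 := by omega
      have h4 : j - j = 0 := by omega
      rw [h3, h4]
      constructor
      · rintro (⟨_, ha, hb⟩ | ⟨_, _, ha, hb⟩)
        · exact ⟨by omega, ha, by linarith⟩
        · rw [hs0] at ha
          exact ⟨by omega, by linarith, by linarith⟩
      · rintro ⟨_, ha, hb⟩
        rcases le_total τ T with hc | hc
        · exact Or.inl ⟨le_rfl, ha, by rw [← hT]; exact hc⟩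
        · exact Or.inr ⟨le_rfl, Nat.zero_le _, by rw [hs0]; linarith, by linarith⟩
    · simp only [if_neg (by omega : ¬ j ≤ J), if_neg (by omega : ¬ j + 1 ≤ J)]
      have h3 : j + 1 - J = (j - J) + 1 := by omega
      rw [h3]
      constructor
      · rintro (⟨hj, _⟩ | ⟨_, hk, ha, hb⟩)
        · omega
        · exact ⟨by omega, by linarith, by linarith⟩
      · rintro ⟨hj, ha, hb⟩
        exact Or.inr ⟨by omega, by omega, by linarith, by linarith⟩

end HTDLemmas

set_option maxHeartbeats 1000000 in
/-- Lemma 9: if `φ₁` and `φ₂` are hybrid arcs with `φ₁(T,J) = φ₂(0,0)` where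
`(T,J) = max dom φ₁`, the concatenation `φ = φ₁|φ₂` is a hybrid arc. -/
theorem concat_is_hybrid_arc {n : ℕ}
    (φ₁ φ₂ φ : ℝ → ℕ → Vec n) (E₁ E₂ E : Set (ℝ × ℕ)) (T : ℝ) (J : ℕ)
    (h₁ : IsHybridArc φ₁ E₁)
    (h₂ : IsHybridArc φ₂ E₂)
    (hcpt : IsCompactHTD E₁)
    (hmax : IsMaxOf E₁ T J)
    (hend : φ₁ T J = φ₂ 0 0)
    (hcat : IsConcat T J φ₁ E₁ φ₂ E₂ φ E) :
    IsHybridArc φ E := by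
  obtain ⟨hE, hval₁, hval₂⟩ := hcat
  obtain ⟨t, ht0, htm, hTt, hE₁⟩ := compact_max_struct hcpt hmax
  obtain ⟨⟨F, hFc, hFm, hFE⟩, hslice₂⟩ := h₂
  obtain ⟨_, hslice₁⟩ := h₁
  have h00 : ((0:ℝ), (0:ℕ)) ∈ E₂ := by
    rw [hFE]; exact Set.mem_iUnion.mpr ⟨0, zero_mem_compactHTD (hFc 0)⟩
  have hE₂pos : ∀ p ∈ E₂, (0:ℝ) ≤ p.1 := by
    intro p hp; rw [hFE] at hp
    obtain ⟨i, hi⟩ := Set.mem_iUnion.mp hp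
    exact compactHTD_nonneg (hFc i) p hi
  have hTJshift : ((T:ℝ), J) ∈ Shift E₂ T J := by
    rw [shift_mem]
    refine ⟨le_rfl, ?_⟩
    simpa using h00
  have hφE₁ : ∀ τ j, (τ, j) ∈ E₁ → φ τ j = φ₁ τ j := by
    intro τ j hp
    by_cases hTJ : (τ, j) = ((T:ℝ), J)
    · rw [Prod.mk.injEq] at hTJ
      obtain ⟨rfl, rfl⟩ := hTJ
      have := hval₂ (τ, j) hTJshift
      simp only [sub_self, Nat.sub_self] at this
      rw [this, ← hend]
    · exact hval₁ (τ, j) hp hTJ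
  have hφsh : ∀ τ j, (τ, j) ∈ Shift E₂ T J → φ τ j = φ₂ (τ - T) (j - J) :=
    fun τ j hp => hval₂ (τ, j) hp
  constructor
  · refine ⟨fun i => E₁ ∪ Shift (F i) T J, fun i => ?_, ?_, ?_⟩
    · rw [hE₁]; exact union_shift_compact ht0 htm hTt (hFc i)
    · intro i i' hii
      exact Set.union_subset_union_right _ (shift_mono (hFm hii))
    · rw [hE, hFE, shift_iUnion, Set.union_iUnion]
  · intro j a b hab hsub
    have hslE : ∀ τ, τ ∈ Set.Icc a b → (τ, j) ∈ E₁ ∨ (τ, j) ∈ Shift E₂ T J := by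
      intro τ hτ
      have h : (τ, j) ∈ E := hsub hτ
      rw [hE] at h
      exact h
    rcases lt_trichotomy j J with hj | rfl | hj
    · have hsub₁ : Set.Icc a b ⊆ Slice E₁ j := by
        intro τ hτ
        rcases hslE τ hτ with h | h
        · exact h
        · obtain ⟨hJ, _⟩ := shift_mem.mp h
          omega
      exact absContOn_congr (fun τ hτ => hφE₁ τ j (hsub₁ hτ)) (hslice₁ j a b hab hsub₁)
    · -- j = J : split at T
      have hle : ∀ τ, (τ, j) ∈ E₁ → τ ≤ T := fun τ h => (hmax.2 _ h).1
      have hge : ∀ τ, (τ, j) ∈ Shift E₂ T j → T ≤ τ := by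
        intro τ h
        obtain ⟨_, h2⟩ := shift_mem.mp h
        have := hE₂pos _ h2
        simp only at this
        linarith
      have hTE₁ : ((T:ℝ), j) ∈ E₁ := hmax.1
      have hleft : ∀ c d, a ≤ c → c ≤ d → d ≤ b → d ≤ T →
          AbsContOn (fun τ => φ τ j) c d := by
        intro c d hac hcd hdb hdT
        have hsub₁ : Set.Icc c d ⊆ Slice E₁ j := by
          intro τ hτ
          rcases hslE τ ⟨le_trans hac hτ.1, le_trans hτ.2 hdb⟩ with h | h
          · exact h
          · have hτT : τ = T := le_antisymm (le_trans hτ.2 hdT) (hge τ h)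
            rw [Slice, Set.mem_setOf_eq, hτT]
            exact hTE₁
        exact absContOn_congr (fun τ hτ => hφE₁ τ j (hsub₁ hτ)) (hslice₁ j c d hcd hsub₁)
      have hright : ∀ c d, a ≤ c → c ≤ d → d ≤ b → T ≤ c →
          AbsContOn (fun τ => φ τ j) c d := by
        intro c d hac hcd hdb hTc
        have hsub₂ : ∀ τ ∈ Set.Icc c d, (τ, j) ∈ Shift E₂ T j := by
          intro τ hτ
          rcases hslE τ ⟨le_trans hac hτ.1, le_trans hτ.2 hdb⟩ with h | h
          · have hτT : τ = T := le_antisymm (hle τ h) (le_trans hTc hτ.1)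
            rw [hτT]
            exact hTJshift
          · exact h
        have hsubS : Set.Icc (c - T) (d - T) ⊆ Slice E₂ 0 := by
          intro σ hσ
          have hm := hsub₂ (σ + T) ⟨by linarith [hσ.1], by linarith [hσ.2]⟩
          obtain ⟨_, h2⟩ := shift_mem.mp hm
          simpa [Slice] using h2
        apply absContOn_congr (g := fun τ => φ₂ (τ - T) 0)
        · intro τ hτ
          have h := hφsh τ j (hsub₂ τ hτ)
          rw [Nat.sub_self] at h
          exact h
        · have h2 := absContOn_translate c d T (hslice₂ 0 (c - T) (d - T) (by linarith) hsubS)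
          exact h2
      by_cases hbT : b ≤ T
      · exact hleft a b le_rfl hab le_rfl hbT
      · by_cases haT : T ≤ a
        · exact hright a b le_rfl hab le_rfl haT
        · push_neg at hbT haT
          exact absContOn_glue haT.le hbT.le
            (hleft a T le_rfl haT.le hbT.le le_rfl)
            (hright T b haT.le hbT.le le_rfl le_rfl)
    · have hsub₂ : ∀ τ ∈ Set.Icc a b, (τ, j) ∈ Shift E₂ T J := by
        intro τ hτ
        rcases hslE τ hτ with h | h
        · have := (hmax.2 _ h).2
          omega
        · exact h
      have hsubS : Set.Icc (a - T) (b - T) ⊆ Slice E₂ (j - J) := by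
        intro σ hσ
        have hm := hsub₂ (σ + T) ⟨by linarith [hσ.1], by linarith [hσ.2]⟩
        obtain ⟨_, h2⟩ := shift_mem.mp hm
        simpa [Slice] using h2
      apply absContOn_congr (g := fun τ => φ₂ (τ - T) (j - J))
      · intro τ hτ
        exact hφsh τ j (hsub₂ τ hτ)
      · have h2 := absContOn_translate a b T (hslice₂ (j - J) (a - T) (b - T) (by linarith) hsubS)
        exact h2
end
end
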